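/- (Theorem MaxWeightMatching / MTTC) Let V be a finite set of trips, G a simple graph on V, c : V → ℝ a cost function on single trips, and ccomb a cost function assigning to each edge {u,v} of G the cost of the combined trip. Weight each edge {u,v} of G by w({u,v}) = c(u) + c(v) − ccomb({u,v}). Define the total cost of a feasible trip set P as the sum of c(v) over all singleton parts {v} of P plus the sum of ccomb(e) over all 2-element parts e of P. Then the minimum total cost over all feasible trip sets equals (∑_{v∈V} c(v)) − W, where W is the maximum, over all matchings M of G, of ∑_{e∈M} w(e). -/

import Mathlib

open Finset

/-- A feasible trip set: a partition of the trip set `V` in which every part is either a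
singleton or a 2-element set forming an edge of the shareability network `G`. -/
def IsFeasibleTripSet {V : Type*} [Fintype V] [DecidableEq V] (G : SimpleGraph V)
    (P : Finpartition (univ : Finset V)) : Prop :=
  ∀ p ∈ P.parts, (∃ v : V, p = {v}) ∨ (∃ u v : V, G.Adj u v ∧ p = {u, v})

/-- A matching of `G`, viewed as a collection of 2-element vertex sets: each member is an
edge of `G`, and the members are pairwise disjoint. -/
def IsGraphMatching {V : Type*} [DecidableEq V] (G : SimpleGraph V)
    (M : Finset (Finset V)) : Prop :=
  (∀ e ∈ M, ∃ u v : V, G.Adj u v ∧ e = {u, v}) ∧ (M : Set (Finset V)).Pairwise Disjoint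

/-- The total cost of a feasible trip set: the sum of `c v` over the singleton parts `{v}`
plus the sum of `ccomb e` over the 2-element parts `e`. -/
def tripSetCost {V : Type*} [Fintype V] [DecidableEq V]
    (c : V → ℝ) (ccomb : Finset V → ℝ) (P : Finpartition (univ : Finset V)) : ℝ :=
  ∑ p ∈ P.parts, if p.card = 1 then ∑ v ∈ p, c v else ccomb p

/-! Every part of a partition of `V` is summed over once, so the cost of a feasible trip set is
`∑ v, c v` minus the weight `∑ v ∈ e, c v - ccomb e` of its 2-element parts, and these parts
form a matching. Conversely, a matching together with the singletons of its unmatched trips is a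
feasible trip set whose cost is `∑ v, c v` minus the weight of the matching. -/

namespace Finpartition

variable {α : Type*} [DecidableEq α] {s t : Finset α}

theorem sum_sum_parts {M : Type*} [AddCommMonoid M] (P : Finpartition s) (f : α → M) :
    ∑ p ∈ P.parts, ∑ a ∈ p, f a = ∑ a ∈ s, f a := by
  conv_rhs => rw [← P.biUnion_parts]
  exact (sum_biUnion P.supIndep.pairwiseDisjoint).symm

@[simps]
def extendBySingletons (P : Finpartition s) (hst : s ⊆ t) : Finpartition t where
  parts := P.parts ∪ (t \ s).map ⟨singleton, singleton_injective⟩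
  supIndep := by
    rw [supIndep_iff_pairwiseDisjoint, coe_union]
    refine P.supIndep.pairwiseDisjoint.union ?_ ?_
    · simpa using pairwiseDisjoint_range_singleton.subset (Set.image_subset_range _ _)
    · simp only [mem_coe, mem_map, mem_sdiff]
      rintro p hp _ ⟨a, ⟨-, ha⟩, rfl⟩ -
      exact disjoint_singleton_right.mpr fun hap ↦ ha (P.le hp hap)
  sup_parts := by
    rw [sup_union, P.sup_parts, sup_map]
    simpa [Function.comp_def] using union_sdiff_of_subset hst
  bot_notMem := by simp

end Finpartition

section TripSharing

variable {V : Type*} [DecidableEq V] {G : SimpleGraph V}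

theorem tripSetCost_eq_sum_sub [Fintype V] (c : V → ℝ) (ccomb : Finset V → ℝ)
    (P : Finpartition (univ : Finset V)) :
    tripSetCost c ccomb P =
      ∑ v, c v - ∑ e ∈ P.parts with e.card ≠ 1, ((∑ v ∈ e, c v) - ccomb e) := by
  rw [sum_filter, ← P.sum_sum_parts, tripSetCost, ← sum_sub_distrib]
  refine sum_congr rfl fun p _ ↦ ?_
  split_ifs <;> simp_all

theorem IsFeasibleTripSet.isGraphMatching [Fintype V] {P : Finpartition (univ : Finset V)}
    (hP : IsFeasibleTripSet G P) : IsGraphMatching G {p ∈ P.parts | p.card ≠ 1} := by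
  refine ⟨fun e he ↦ ?_, P.disjoint.subset (coe_subset.mpr (filter_subset _ _))⟩
  obtain ⟨heP, hcard⟩ := mem_filter.mp he
  obtain ⟨v, rfl⟩ | hedge := hP e heP
  · exact absurd (card_singleton v) hcard
  · exact hedge

namespace IsGraphMatching

variable {M : Finset (Finset V)}

theorem card_eq_two (hM : IsGraphMatching G M) {e : Finset V} (he : e ∈ M) : e.card = 2 := by
  obtain ⟨u, v, huv, rfl⟩ := hM.1 e he
  exact card_pair huv.ne

def toFinpartition [Fintype V] (hM : IsGraphMatching G M) : Finpartition (univ : Finset V) :=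
  (Finpartition.ofPairwiseDisjoint M hM.2).extendBySingletons (subset_univ _)

theorem toFinpartition_parts [Fintype V] (hM : IsGraphMatching G M) :
    hM.toFinpartition.parts = M ∪ (univ \ M.sup id).map ⟨singleton, singleton_injective⟩ := by
  have hempty : (⊥ : Finset V) ∉ M := fun h ↦ by simpa using hM.card_eq_two h
  exact congrArg (· ∪ _) (erase_eq_of_notMem hempty)

theorem isFeasibleTripSet_toFinpartition [Fintype V] (hM : IsGraphMatching G M) :
    IsFeasibleTripSet G hM.toFinpartition := by
  intro p hp
  rw [toFinpartition_parts, mem_union, mem_map] at hp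
  obtain hp | ⟨v, -, rfl⟩ := hp
  · exact Or.inr (hM.1 p hp)
  · exact Or.inl ⟨v, rfl⟩

theorem filter_card_ne_one_toFinpartition [Fintype V] (hM : IsGraphMatching G M) :
    {p ∈ hM.toFinpartition.parts | p.card ≠ 1} = M := by
  rw [toFinpartition_parts, filter_union, filter_true_of_mem, filter_false_of_mem, union_empty]
  · simp
  · exact fun e he ↦ by simp [hM.card_eq_two he]

end IsGraphMatching

end TripSharing

/-- Theorem MaxWeightMatching / MTTC: weighting each edge `e = {u,v}` of `G` by
`w e = c u + c v - ccomb e`, the minimum total travel cost over all feasible trip sets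
equals `(∑ v, c v) - W`, where `W` is the maximum total weight of a matching of `G`. -/
theorem min_cost_eq_total_sub_max_weight_matching
    {V : Type*} [Fintype V] [DecidableEq V] (G : SimpleGraph V)
    (c : V → ℝ) (ccomb : Finset V → ℝ) (W : ℝ)
    (hW : IsGreatest {x : ℝ | ∃ M : Finset (Finset V), IsGraphMatching G M ∧
        ∑ e ∈ M, ((∑ v ∈ e, c v) - ccomb e) = x} W) :
    IsLeast {x : ℝ | ∃ P : Finpartition (univ : Finset V),
        IsFeasibleTripSet G P ∧ tripSetCost c ccomb P = x} ((∑ v : V, c v) - W) := by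
  obtain ⟨⟨M, hM, rfl⟩, hmax⟩ := hW
  refine ⟨⟨hM.toFinpartition, hM.isFeasibleTripSet_toFinpartition, ?_⟩, ?_⟩
  · rw [tripSetCost_eq_sum_sub, hM.filter_card_ne_one_toFinpartition]
  · rintro _ ⟨P, hP, rfl⟩
    rw [tripSetCost_eq_sum_sub]
    linarith [hmax ⟨_, hP.isGraphMatching, rfl⟩]
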